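/- arXiv:2204.08538 — 4 statements merged into one kernel-verified Lean document; each statement's English description precedes it below -/
import Mathlib

section
/- Let p be a strictly positive probability vector in ℝ^k, let Ω(p) = diag(p) − p pᵀ, and let G be a real k×d matrix whose columns are linearly independent and whose column span does not contain the all-ones vector 1_k. Then the d×d matrix C = Gᵀ Ω(p) G is symmetric and positive definite. -/
/-!
For `y ∈ ℝ^k` and `∑ pᵢ = 1`, the quadratic form of `Ω(p)` is the variance of `y` under `p`:
`yᵀ Ω(p) y = ∑ pᵢ (yᵢ - p ⬝ y)²`. With `p > 0` it vanishes only on constant vectors. Hence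
`xᵀ C x = (Gx)ᵀ Ω(p) (Gx) > 0` unless `Gx` is constant, and a constant `Gx` with `x ≠ 0` is
impossible: a zero one contradicts the independence of the columns, a nonzero one would put
`1_k` in their span.
-/

open Matrix

namespace Matrix

variable {ι κ R : Type*}

theorem IsSymm.transpose_mul_mul [Fintype ι] [CommSemiring R] {A : Matrix ι ι R} (hA : A.IsSymm)
    (B : Matrix ι κ R) : (Bᵀ * A * B).IsSymm := by
  rw [IsSymm, transpose_mul, transpose_mul, transpose_transpose, hA.eq, Matrix.mul_assoc]

theorem posDef_transpose_mul_mul [Fintype ι] [Fintype κ] [CommRing R] [PartialOrder R]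
    [StarRing R] [TrivialStar R] {A : Matrix ι ι R} (hA : A.IsSymm) {B : Matrix ι κ R}
    (hpos : ∀ x, x ≠ 0 → 0 < B *ᵥ x ⬝ᵥ A *ᵥ (B *ᵥ x)) : (Bᵀ * A * B).PosDef := by
  refine posDef_iff_dotProduct_mulVec.mpr ⟨isHermitian_iff_isSymm.mpr (hA.transpose_mul_mul B),
    fun x hx => ?_⟩
  rw [star_trivial, ← mulVec_mulVec, ← mulVec_mulVec, dotProduct_mulVec x, vecMul_transpose]
  exact hpos x hx

theorem mulVec_ne_const [Field R] [Fintype κ] {G : Matrix ι κ R}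
    (hind : LinearIndependent R G.col)
    (hone : (fun _ => (1 : R)) ∉ Submodule.span R (Set.range G.col))
    {x : κ → R} (hx : x ≠ 0) (c : R) : G *ᵥ x ≠ fun _ => c := by
  intro hGx
  rcases eq_or_ne c 0 with rfl | hc
  · exact hx (mulVec_injective_iff.mpr hind (hGx.trans (mulVec_zero G).symm))
  · have hmem : G *ᵥ x ∈ Submodule.span R (Set.range G.col) :=
      G.range_mulVecLin ▸ LinearMap.mem_range_self G.mulVecLin x
    refine hone ?_
    convert Submodule.smul_mem _ c⁻¹ hmem using 1
    ext i
    simp [hGx, hc]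

section Omega

variable [DecidableEq ι]

theorem isSymm_diagonal_sub_vecMulVec_self [CommRing R] (p : ι → R) :
    (diagonal p - vecMulVec p p).IsSymm :=
  (isSymm_diagonal p).sub (transpose_vecMulVec p p)

theorem dotProduct_diagonal_sub_vecMulVec_mulVec [Fintype ι] [CommRing R] {p : ι → R}
    (hsum : ∑ i, p i = 1) (y : ι → R) :
    y ⬝ᵥ (diagonal p - vecMulVec p p) *ᵥ y = ∑ i, p i * (y i - p ⬝ᵥ y) ^ 2 := by
  set m := p ⬝ᵥ y
  have hdiag : y ⬝ᵥ diagonal p *ᵥ y = ∑ i, p i * y i ^ 2 := by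
    simp only [dotProduct, mulVec_diagonal]
    exact Finset.sum_congr rfl fun i _ => by ring
  have hrank_one : y ⬝ᵥ vecMulVec p p *ᵥ y = m ^ 2 := by
    rw [vecMulVec_mulVec, dotProduct_comm, smul_dotProduct, op_smul_eq_mul, sq]
  calc y ⬝ᵥ (diagonal p - vecMulVec p p) *ᵥ y
      = ∑ i, p i * y i ^ 2 - 2 * m * ∑ i, p i * y i + m ^ 2 * ∑ i, p i := by
        rw [sub_mulVec, dotProduct_sub, hdiag, hrank_one, hsum,
          show ∑ i, p i * y i = m from rfl]
        ring
    _ = ∑ i, p i * (y i - m) ^ 2 := by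
        simp only [Finset.mul_sum, ← Finset.sum_sub_distrib, ← Finset.sum_add_distrib]
        exact Finset.sum_congr rfl fun i _ => by ring

theorem dotProduct_diagonal_sub_vecMulVec_mulVec_pos [Fintype ι] [CommRing R] [LinearOrder R]
    [IsStrictOrderedRing R] {p : ι → R} (hpos : ∀ i, 0 < p i) (hsum : ∑ i, p i = 1)
    {y : ι → R} (hy : ∀ c, y ≠ fun _ => c) :
    0 < y ⬝ᵥ (diagonal p - vecMulVec p p) *ᵥ y := by
  obtain ⟨i, hi⟩ : ∃ i, y i ≠ p ⬝ᵥ y := by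
    by_contra! h
    exact hy _ (funext h)
  rw [dotProduct_diagonal_sub_vecMulVec_mulVec hsum]
  exact Finset.sum_pos' (fun j _ => mul_nonneg (hpos j).le (sq_nonneg _))
    ⟨i, Finset.mem_univ i, mul_pos (hpos i) (sq_pos_of_ne_zero (sub_ne_zero.mpr hi))⟩

end Omega

end Matrix

/-- If `p` is a strictly positive probability vector, `Ω(p) = diag(p) − p pᵀ`, and
`G` is a `k × d` real matrix with linearly independent columns whose span does not
contain the all-ones vector, then `C = Gᵀ Ω(p) G` is symmetric and positive definite. -/
theorem gramian_of_omega_posDef (k d : ℕ) (p : Fin k → ℝ)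
    (hpos : ∀ i, 0 < p i) (hsum : ∑ i, p i = 1)
    (G : Matrix (Fin k) (Fin d) ℝ)
    (hind : LinearIndependent ℝ (fun j : Fin d => fun i : Fin k => G i j))
    (hone : (fun _ => (1 : ℝ)) ∉
      Submodule.span ℝ (Set.range (fun j : Fin d => fun i : Fin k => G i j))) :
    (G.transpose * (Matrix.diagonal p - Matrix.vecMulVec p p) * G).IsSymm ∧
    (G.transpose * (Matrix.diagonal p - Matrix.vecMulVec p p) * G).PosDef := by
  have hΩ := isSymm_diagonal_sub_vecMulVec_self p
  refine ⟨hΩ.transpose_mul_mul G, posDef_transpose_mul_mul hΩ fun x hx => ?_⟩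
  exact dotProduct_diagonal_sub_vecMulVec_mulVec_pos hpos hsum (mulVec_ne_const hind hone hx)
end

section
/- Let X and W be finite nonempty types, each with a distinguished reference element 0, and let Y = {0,1}. Let p¹ and p² be two strictly positive probability mass functions on X × W × Y. Suppose (a) both distributions have all three-way log-linear interactions equal to zero, i.e. θ_XWY(x,w) := log p(x,w,1) − log p(x,w,0) − log p(x,0,1) + log p(x,0,0) − log p(0,w,1) + log p(0,w,0) + log p(0,0,1) − log p(0,0,0) vanishes for all x, w under both p¹ and p²; and (b) the three two-way marginal distributions agree: Σ_y p¹(x,w,y) = Σ_y p²(x,w,y) for all (x,w), Σ_w p¹(x,w,y) = Σ_w p²(x,w,y) for all (x,y), and Σ_x p¹(x,w,y) = Σ_x p²(x,w,y) for all (w,y). Then p¹ = p². -/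
/-- If two strictly positive pmfs on `X × W × Y` (with `Y = {0,1}`) both have all
three-way log-linear interactions `θ_XWY` equal to zero and share the same three
two-way marginal distributions (`XW`, `XY` and `WY`), then they are equal. -/
theorem no_threeway_interaction_determined_by_twoway_margins
    {X W : Type*} [Fintype X] [Fintype W] [Nonempty X] [Nonempty W]
    [Zero X] [Zero W]
    (p₁ p₂ : X → W → Fin 2 → ℝ)
    (hpos₁ : ∀ x w y, 0 < p₁ x w y) (hpos₂ : ∀ x w y, 0 < p₂ x w y)
    (hsum₁ : ∑ x, ∑ w, ∑ y, p₁ x w y = 1)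
    (hsum₂ : ∑ x, ∑ w, ∑ y, p₂ x w y = 1)
    (hθ₁ : ∀ x w,
      Real.log (p₁ x w 1) - Real.log (p₁ x w 0)
        - Real.log (p₁ x 0 1) + Real.log (p₁ x 0 0)
        - Real.log (p₁ 0 w 1) + Real.log (p₁ 0 w 0)
        + Real.log (p₁ 0 0 1) - Real.log (p₁ 0 0 0) = 0)
    (hθ₂ : ∀ x w,
      Real.log (p₂ x w 1) - Real.log (p₂ x w 0)
        - Real.log (p₂ x 0 1) + Real.log (p₂ x 0 0)
        - Real.log (p₂ 0 w 1) + Real.log (p₂ 0 w 0)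
        + Real.log (p₂ 0 0 1) - Real.log (p₂ 0 0 0) = 0)
    (hXW : ∀ x w, ∑ y, p₁ x w y = ∑ y, p₂ x w y)
    (hXY : ∀ x y, ∑ w, p₁ x w y = ∑ w, p₂ x w y)
    (hWY : ∀ w y, ∑ x, p₁ x w y = ∑ x, p₂ x w y) :
    p₁ = p₂ := by
  set D : X → W → ℝ := fun x w => p₁ x w 1 - p₂ x w 1 with hDdef
  set t : X → W → ℝ := fun x w =>
    (Real.log (p₁ x w 1) - Real.log (p₁ x w 0))
      - (Real.log (p₂ x w 1) - Real.log (p₂ x w 0)) with htdef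
  have hXW' : ∀ x w, p₁ x w 0 + p₁ x w 1 = p₂ x w 0 + p₂ x w 1 := by
    intro x w
    have := hXW x w
    simpa [Fin.sum_univ_two] using this
  have key : ∀ x w, 0 ≤ D x w * t x w ∧ (D x w * t x w = 0 → p₁ x w 1 = p₂ x w 1) := by
    intro x w
    have hs := hXW' x w
    rcases lt_trichotomy (p₁ x w 1) (p₂ x w 1) with h | h | h
    · have ha : p₂ x w 0 < p₁ x w 0 := by linarith
      have l1 : Real.log (p₁ x w 1) < Real.log (p₂ x w 1) :=
        Real.log_lt_log (hpos₁ x w 1) h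
      have l2 : Real.log (p₂ x w 0) < Real.log (p₁ x w 0) :=
        Real.log_lt_log (hpos₂ x w 0) ha
      have hDneg : D x w < 0 := by simp [hDdef]; linarith
      have htneg : t x w < 0 := by simp [htdef]; linarith
      constructor
      · exact (mul_pos_of_neg_of_neg hDneg htneg).le
      · intro h0
        nlinarith
    · have ha : p₁ x w 0 = p₂ x w 0 := by linarith
      constructor
      · simp [hDdef, htdef, h, ha]
      · intro _; exact h
    · have ha : p₁ x w 0 < p₂ x w 0 := by linarith
      have l1 : Real.log (p₂ x w 1) < Real.log (p₁ x w 1) :=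
        Real.log_lt_log (hpos₂ x w 1) h
      have l2 : Real.log (p₁ x w 0) < Real.log (p₂ x w 0) :=
        Real.log_lt_log (hpos₁ x w 0) ha
      have hDpos : 0 < D x w := by simp [hDdef]; linarith
      have htpos : 0 < t x w := by simp [htdef]; linarith
      constructor
      · exact (mul_pos hDpos htpos).le
      · intro h0
        nlinarith
  have hadd : ∀ x w, t x w = t x 0 + (t 0 w - t 0 0) := by
    intro x w
    have h1 := hθ₁ x w
    have h2 := hθ₂ x w
    simp only [htdef]
    linarith
  have hrow : ∀ x : X, ∑ w, D x w = 0 := by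
    intro x
    have := hXY x 1
    simp only [hDdef, Finset.sum_sub_distrib]
    rw [this]; ring
  have hcol : ∀ w : W, ∑ x, D x w = 0 := by
    intro w
    have := hWY w 1
    simp only [hDdef, Finset.sum_sub_distrib]
    rw [this]; ring
  have hS : ∑ x, ∑ w, D x w * t x w = 0 := by
    have step : ∀ x : X, ∑ w, D x w * t x w
        = (∑ w, D x w) * t x 0 + ∑ w, D x w * (t 0 w - t 0 0) := by
      intro x
      rw [Finset.sum_mul, ← Finset.sum_add_distrib]
      refine Finset.sum_congr rfl fun w _ => ?_
      rw [hadd x w]; ring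
    calc ∑ x, ∑ w, D x w * t x w
        = ∑ x, ((∑ w, D x w) * t x 0 + ∑ w, D x w * (t 0 w - t 0 0)) :=
          Finset.sum_congr rfl fun x _ => step x
      _ = ∑ x, ∑ w, D x w * (t 0 w - t 0 0) := by
          refine Finset.sum_congr rfl fun x _ => ?_
          rw [hrow x]; ring
      _ = ∑ w, (∑ x, D x w) * (t 0 w - t 0 0) := by
          rw [Finset.sum_comm]
          exact Finset.sum_congr rfl fun w _ => (Finset.sum_mul _ _ _).symm
      _ = 0 := Finset.sum_eq_zero fun w _ => by rw [hcol w]; ring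
  have hterm : ∀ x w, D x w * t x w = 0 := by
    intro x w
    have h1 : ∀ x ∈ (Finset.univ : Finset X), 0 ≤ ∑ w, D x w * t x w :=
      fun x _ => Finset.sum_nonneg fun w _ => (key x w).1
    have h2 := (Finset.sum_eq_zero_iff_of_nonneg h1).mp hS x (Finset.mem_univ x)
    have h3 := (Finset.sum_eq_zero_iff_of_nonneg (fun w _ => (key x w).1)).mp h2 w
      (Finset.mem_univ w)
    exact h3
  have h1 : ∀ x w, p₁ x w 1 = p₂ x w 1 := fun x w => (key x w).2 (hterm x w)
  have h0 : ∀ x w, p₁ x w 0 = p₂ x w 0 := by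
    intro x w
    have := hXW' x w
    have := h1 x w
    linarith
  funext x w y
  fin_cases y
  · exact h0 x w
  · exact h1 x w
end

section
/- Let X and W be finite nonempty types, each with a distinguished reference element 0, and let Y = {0,1}. Let p be a strictly positive probability mass function on X × W × Y. Define the joint XY-interaction at reference category 0 by λ_XY(x,y) = log p(x,0,y) + log p(0,0,0) − log p(x,0,0) − log p(0,0,y), and the marginal XY-interaction by λ_{XY;XY}(x,y) = log q(x,y) + log q(0,0) − log q(x,0) − log q(0,y), where q(x,y) = Σ_w p(x,w,y). Writing p_W̄(x,y) = P(W = 0 | X = x, Y = y) = p(x,0,y) / Σ_w p(x,w,y), one has λ_XY(x,y) − λ_{XY;XY}(x,y) = log [ p_W̄(0,0) · p_W̄(x,y) / ( p_W̄(0,y) · p_W̄(x,0) ) ] for all x ∈ X and y ∈ Y. -/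
/-- Corollary 1 (first part): the difference between the joint `XY`-interaction and
the marginal `XY`-interaction equals the log odds ratio of the conditional
probabilities `p_W̄(x,y) = P(W = 0 | X = x, Y = y)`. -/
theorem joint_minus_marginal_XY_interaction
    {X W : Type*} [Fintype X] [Fintype W] [Nonempty X] [Nonempty W]
    [Zero X] [Zero W]
    (p : X → W → Fin 2 → ℝ)
    (hpos : ∀ x w y, 0 < p x w y)
    (hsum : ∑ x, ∑ w, ∑ y, p x w y = 1)
    (q : X → Fin 2 → ℝ) (hq : ∀ x y, q x y = ∑ w, p x w y)
    (pWbar : X → Fin 2 → ℝ) (hpWbar : ∀ x y, pWbar x y = p x 0 y / ∑ w, p x w y)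
    (x : X) (y : Fin 2) :
    (Real.log (p x 0 y) + Real.log (p 0 0 0)
      - Real.log (p x 0 0) - Real.log (p 0 0 y)) -
    (Real.log (q x y) + Real.log (q 0 0)
      - Real.log (q x 0) - Real.log (q 0 y)) =
    Real.log (pWbar 0 0 * pWbar x y / (pWbar 0 y * pWbar x 0)) := by
  have hqpos : ∀ x y, 0 < q x y := fun x y => by
    rw [hq]; exact Finset.sum_pos (fun w _ => hpos x w y) Finset.univ_nonempty
  have hWb : ∀ x y, pWbar x y = p x 0 y / q x y := fun x y => by
    rw [hpWbar, hq]
  have hWpos : ∀ x y, 0 < pWbar x y := fun x y => by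
    rw [hWb]; exact div_pos (hpos x 0 y) (hqpos x y)
  rw [Real.log_div (mul_pos (hWpos 0 0) (hWpos x y)).ne' (mul_pos (hWpos 0 y) (hWpos x 0)).ne',
    Real.log_mul (hWpos 0 0).ne' (hWpos x y).ne',
    Real.log_mul (hWpos 0 y).ne' (hWpos x 0).ne',
    hWb, hWb, hWb, hWb,
    Real.log_div (hpos 0 0 0).ne' (hqpos 0 0).ne',
    Real.log_div (hpos x 0 y).ne' (hqpos x y).ne',
    Real.log_div (hpos 0 0 y).ne' (hqpos 0 y).ne',
    Real.log_div (hpos x 0 0).ne' (hqpos x 0).ne']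
  ring
end

section
/- Let X and W be finite nonempty types, each with a distinguished reference element 0, and let Y = {0,1}. Let p¹ and p² be two strictly positive probability mass functions on X × W × Y. Suppose all reference-coded joint log-linear parameters involving W agree between p¹ and p², namely λ_W(w), λ_WX(w,x), λ_WY(w) and λ_XWY(x,w) (defined as the corresponding alternating sums of log p) are the same for p¹ and p² for all x ∈ X, w ∈ W. Then the differences between marginal and joint XY-interactions coincide for the two distributions; in particular, for all x ∈ X and y ∈ Y, λ¹_{XY;XY}(x,y) − λ²_{XY;XY}(x,y) = λ¹_XY(x,y) − λ²_XY(x,y), where λ^i_XY is the joint XY-interaction and λ^i_{XY;XY} the marginal XY-interaction of p^i. -/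
/-- If two strictly positive pmfs on `X × W × Y` share all reference-coded joint
log-linear parameters involving `W` (namely `λ_W`, `λ_WX`, `λ_WY` and `λ_XWY`),
then the difference between their marginal `XY`-interactions equals the difference
between their joint `XY`-interactions. -/
theorem marginal_minus_joint_XY_difference_invariant
    {X W : Type*} [Fintype X] [Fintype W] [Nonempty X] [Nonempty W]
    [Zero X] [Zero W]
    (p₁ p₂ : X → W → Fin 2 → ℝ)
    (hpos₁ : ∀ x w y, 0 < p₁ x w y) (hpos₂ : ∀ x w y, 0 < p₂ x w y)
    (hsum₁ : ∑ x, ∑ w, ∑ y, p₁ x w y = 1)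
    (hsum₂ : ∑ x, ∑ w, ∑ y, p₂ x w y = 1)
    (hW : ∀ w, Real.log (p₁ 0 w 0) - Real.log (p₁ 0 0 0) =
               Real.log (p₂ 0 w 0) - Real.log (p₂ 0 0 0))
    (hWX : ∀ w x,
      Real.log (p₁ x w 0) + Real.log (p₁ 0 0 0)
        - Real.log (p₁ x 0 0) - Real.log (p₁ 0 w 0) =
      Real.log (p₂ x w 0) + Real.log (p₂ 0 0 0)
        - Real.log (p₂ x 0 0) - Real.log (p₂ 0 w 0))
    (hWY : ∀ w,
      Real.log (p₁ 0 w 1) + Real.log (p₁ 0 0 0)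
        - Real.log (p₁ 0 0 1) - Real.log (p₁ 0 w 0) =
      Real.log (p₂ 0 w 1) + Real.log (p₂ 0 0 0)
        - Real.log (p₂ 0 0 1) - Real.log (p₂ 0 w 0))
    (hXWY : ∀ x w,
      Real.log (p₁ x w 1) - Real.log (p₁ x w 0)
        - Real.log (p₁ x 0 1) + Real.log (p₁ x 0 0)
        - Real.log (p₁ 0 w 1) + Real.log (p₁ 0 w 0)
        + Real.log (p₁ 0 0 1) - Real.log (p₁ 0 0 0) =
      Real.log (p₂ x w 1) - Real.log (p₂ x w 0)
        - Real.log (p₂ x 0 1) + Real.log (p₂ x 0 0)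
        - Real.log (p₂ 0 w 1) + Real.log (p₂ 0 w 0)
        + Real.log (p₂ 0 0 1) - Real.log (p₂ 0 0 0))
    (x : X) (y : Fin 2) :
    ((Real.log (∑ w, p₁ x w y) + Real.log (∑ w, p₁ 0 w 0)
        - Real.log (∑ w, p₁ x w 0) - Real.log (∑ w, p₁ 0 w y)) -
     (Real.log (∑ w, p₂ x w y) + Real.log (∑ w, p₂ 0 w 0)
        - Real.log (∑ w, p₂ x w 0) - Real.log (∑ w, p₂ 0 w y))) =
    ((Real.log (p₁ x 0 y) + Real.log (p₁ 0 0 0)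
        - Real.log (p₁ x 0 0) - Real.log (p₁ 0 0 y)) -
     (Real.log (p₂ x 0 y) + Real.log (p₂ 0 0 0)
        - Real.log (p₂ x 0 0) - Real.log (p₂ 0 0 y))) := by
  have key : ∀ x w (y : Fin 2),
      Real.log (p₁ x w y) - Real.log (p₁ x 0 y) =
      Real.log (p₂ x w y) - Real.log (p₂ x 0 y) := by
    intro x w y
    have hy : y = 0 ∨ y = 1 := by omega
    rcases hy with rfl | rfl
    · have h1 := hW w; have h2 := hWX w x; linarith
    · have h1 := hW w; have h2 := hWX w x; have h3 := hWY w
      have h4 := hXWY x w; linarith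
  have ratio : ∀ x w (y : Fin 2), p₁ x w y / p₁ x 0 y = p₂ x w y / p₂ x 0 y := by
    intro x w y
    have h := key x w y
    rw [← Real.log_div (hpos₁ x w y).ne' (hpos₁ x 0 y).ne',
        ← Real.log_div (hpos₂ x w y).ne' (hpos₂ x 0 y).ne'] at h
    exact Real.log_injOn_pos (Set.mem_Ioi.mpr (div_pos (hpos₁ x w y) (hpos₁ x 0 y)))
      (Set.mem_Ioi.mpr (div_pos (hpos₂ x w y) (hpos₂ x 0 y))) h
  set S : X → Fin 2 → ℝ := fun x y => ∑ w, p₁ x w y / p₁ x 0 y with hS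
  have Spos : ∀ x y, 0 < S x y := fun x y =>
    Finset.sum_pos (fun w _ => div_pos (hpos₁ x w y) (hpos₁ x 0 y)) Finset.univ_nonempty
  have hlog1 : ∀ x (y : Fin 2),
      Real.log (∑ w, p₁ x w y) = Real.log (p₁ x 0 y) + Real.log (S x y) := by
    intro x y
    have hs : (∑ w, p₁ x w y) = p₁ x 0 y * S x y := by
      rw [hS, Finset.mul_sum]
      refine Finset.sum_congr rfl fun w _ => ?_
      rw [mul_comm]
      exact (div_mul_cancel₀ _ (hpos₁ x 0 y).ne').symm
    rw [hs, Real.log_mul (hpos₁ x 0 y).ne' (Spos x y).ne']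
  have hlog2 : ∀ x (y : Fin 2),
      Real.log (∑ w, p₂ x w y) = Real.log (p₂ x 0 y) + Real.log (S x y) := by
    intro x y
    have hs : (∑ w, p₂ x w y) = p₂ x 0 y * S x y := by
      rw [hS, Finset.mul_sum]
      refine Finset.sum_congr rfl fun w _ => ?_
      rw [ratio x w y, mul_comm]
      exact (div_mul_cancel₀ _ (hpos₂ x 0 y).ne').symm
    rw [hs, Real.log_mul (hpos₂ x 0 y).ne' (Spos x y).ne']
  rw [hlog1 x y, hlog1 0 0, hlog1 x 0, hlog1 0 y,
      hlog2 x y, hlog2 0 0, hlog2 x 0, hlog2 0 y]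
  ring
end
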